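/- Let ν ≥ 3 and let Ψ be a set of coverings with #Ψ ≥ 2. If the number t of monomials of the RVB polynomial F_Ψ = Σ_{ψ∈Ψ} F_ψ satisfies t < 2^ν + 2ν, then there exist a ∈ A and b ∈ B such that ψ(a) = b for every ψ ∈ Ψ; hence Ψ is decomposable via E = {a,b}, and F_Ψ splits across the bipartition ({a,b}, Γ_{2ν} ∖ {a,b}). -/
import Mathlib


open MvPolynomial Finset

noncomputable section

/-- The odd-labelled site `2t−1` of the paper (`t`-th site of sublattice `A`),
zero-indexed as `2t` in `Fin (2ν)`. -/
def siteA (ν : ℕ) (t : Fin ν) : Fin (2 * ν) := ⟨2 * t.val, by have := t.isLt; omega⟩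

/-- The even-labelled site `2t` of the paper (`t`-th site of sublattice `B`),
zero-indexed as `2t+1` in `Fin (2ν)`. -/
def siteB (ν : ℕ) (t : Fin ν) : Fin (2 * ν) := ⟨2 * t.val + 1, by have := t.isLt; omega⟩

/-- A covering is a bijection `ψ : A → B`; it is encoded by the permutation
`σ` of `Fin ν` with `ψ(siteA t) = siteB (σ t)`.  Its covering polynomial is
`F_ψ = ∏_{a∈A} (X_{ψ(a)} − X_a)`. -/
def covPoly (ν : ℕ) (σ : Equiv.Perm (Fin ν)) : MvPolynomial (Fin (2 * ν)) ℂ :=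
  ∏ t : Fin ν, (X (siteB ν (σ t)) - X (siteA ν t))

/-- `F` splits across the bipartition `(E, Eᶜ)`. -/
def SplitsAcross {n : ℕ} (F : MvPolynomial (Fin n) ℂ) (E : Finset (Fin n)) : Prop :=
  ∃ p q : MvPolynomial (Fin n) ℂ, F = p * q ∧ p.vars ⊆ E ∧ q.vars ⊆ Eᶜ

/-- `ψ(E ∩ A) = E ∩ B` for the covering `ψ` encoded by `σ`
(here `E ∩ B` is the set of odd-indexed, i.e. `B`-sublattice, elements of `E`). -/
def MapsCut (ν : ℕ) (σ : Equiv.Perm (Fin ν)) (E : Finset (Fin (2 * ν))) : Prop :=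
  ((Finset.univ.filter (fun t => siteA ν t ∈ E)).image fun t => siteB ν (σ t))
    = E.filter (fun x => x.val % 2 = 1)


/-- The (unnormalized) RVB polynomial `F_Ψ = Σ_{ψ∈Ψ} F_ψ`. -/
def rvbPoly (ν : ℕ) (Ψ : Finset (Equiv.Perm (Fin ν))) : MvPolynomial (Fin (2 * ν)) ℂ :=
  ∑ σ ∈ Ψ, covPoly ν σ

lemma siteA_inj {ν : ℕ} : Function.Injective (siteA ν) := by
  intro a b h; simp only [siteA, Fin.mk.injEq] at h; exact Fin.ext (by omega)

lemma siteB_inj {ν : ℕ} : Function.Injective (siteB ν) := by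
  intro a b h; simp only [siteB, Fin.mk.injEq] at h; exact Fin.ext (by omega)

lemma siteA_ne_siteB {ν : ℕ} (a b : Fin ν) : siteA ν a ≠ siteB ν b := by
  simp only [siteA, siteB, ne_eq, Fin.mk.injEq]; omega

/-- exponent of the monomial indexed by `(S, T)`. -/
def expo (ν : ℕ) (S T : Finset (Fin ν)) : Fin (2 * ν) →₀ ℕ :=
  (∑ b ∈ T, Finsupp.single (siteB ν b) 1) + ∑ t ∈ Sᶜ, Finsupp.single (siteA ν t) 1

lemma expo_apply_A {ν : ℕ} (S T : Finset (Fin ν)) (t : Fin ν) :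
    expo ν S T (siteA ν t) = if t ∈ S then 0 else 1 := by
  classical
  simp only [expo, Finsupp.add_apply, Finset.sum_apply', Finsupp.single_apply]
  rw [Finset.sum_eq_zero (fun b _ => by
    rw [if_neg (fun h => siteA_ne_siteB t b h.symm)])]
  rw [Finset.sum_congr rfl (fun x _ => by
    rw [show (if siteA ν x = siteA ν t then (1:ℕ) else 0) = if x = t then 1 else 0 from by
      by_cases h : x = t
      · simp [h]
      · rw [if_neg h, if_neg (fun hh => h (siteA_inj hh))]])]
  rw [Finset.sum_ite_eq' Sᶜ t (fun _ => 1)]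
  simp only [Finset.mem_compl, zero_add]
  by_cases h : t ∈ S <;> simp [h]

lemma expo_apply_B {ν : ℕ} (S T : Finset (Fin ν)) (b : Fin ν) :
    expo ν S T (siteB ν b) = if b ∈ T then 1 else 0 := by
  classical
  simp only [expo, Finsupp.add_apply, Finset.sum_apply', Finsupp.single_apply]
  rw [Finset.sum_eq_zero (s := Sᶜ) (fun a _ => by
    rw [if_neg (fun h => siteA_ne_siteB a b h)])]
  rw [Finset.sum_congr rfl (fun x (_ : x ∈ T) => by
    rw [show (if siteB ν x = siteB ν b then (1:ℕ) else 0) = if x = b then 1 else 0 from by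
      by_cases h : x = b
      · simp [h]
      · rw [if_neg h, if_neg (fun hh => h (siteB_inj hh))]])]
  rw [Finset.sum_ite_eq' T b (fun _ => 1)]
  simp

lemma expo_inj {ν : ℕ} {S T S' T' : Finset (Fin ν)} (h : expo ν S T = expo ν S' T') :
    S = S' ∧ T = T' := by
  constructor
  · ext t
    have := DFunLike.congr_fun h (siteA ν t)
    simp only [expo_apply_A] at this
    by_cases h1 : t ∈ S <;> by_cases h2 : t ∈ S' <;> simp_all
  · ext b
    have := DFunLike.congr_fun h (siteB ν b)
    simp only [expo_apply_B] at this
    by_cases h1 : b ∈ T <;> by_cases h2 : b ∈ T' <;> simp_all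

lemma prodX {n : ℕ} {ι : Type*} (s : Finset ι) (f : ι → Fin n) :
    ∏ i ∈ s, (X (f i) : MvPolynomial (Fin n) ℂ)
      = monomial (∑ i ∈ s, Finsupp.single (f i) 1) 1 := by
  classical
  induction s using Finset.cons_induction with
  | empty => simp
  | cons a s ha ih =>
      rw [Finset.prod_cons, Finset.sum_cons, ih, X, monomial_mul, one_mul]

lemma covPoly_eq {ν : ℕ} (σ : Equiv.Perm (Fin ν)) :
    covPoly ν σ = ∑ S : Finset (Fin ν),
      monomial (expo ν S (S.image σ)) ((-1 : ℂ) ^ Sᶜ.card) := by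
  classical
  unfold covPoly
  simp_rw [sub_eq_add_neg]
  rw [Fintype.prod_add]
  refine Finset.sum_congr rfl fun S _ => ?_
  have h1 : ∏ t ∈ Sᶜ, (-(X (siteA ν t)) : MvPolynomial (Fin (2*ν)) ℂ)
      = C ((-1 : ℂ) ^ Sᶜ.card) * monomial (∑ t ∈ Sᶜ, Finsupp.single (siteA ν t) 1) 1 := by
    rw [← prodX]
    rw [show ∀ (p : MvPolynomial (Fin (2*ν)) ℂ), (C ((-1:ℂ) ^ Sᶜ.card)) * p
        = (-1 : MvPolynomial (Fin (2*ν)) ℂ) ^ Sᶜ.card * p from fun p => by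
      rw [← C_1 (R := ℂ), ← C_neg, ← C_pow]]
    rw [← Finset.prod_const, ← Finset.prod_mul_distrib]
    exact Finset.prod_congr rfl fun t _ => (neg_one_mul _).symm
  rw [h1, prodX]
  have h2 : (∑ b ∈ S.image σ, Finsupp.single (siteB ν b) (1:ℕ))
      = ∑ t ∈ S, Finsupp.single (siteB ν (σ t)) 1 :=
    Finset.sum_image (fun a _ b _ h => σ.injective h)
  rw [← h2, mul_left_comm, monomial_mul, mul_one, C_mul_monomial, mul_one]
  rfl

lemma coeff_covPoly {ν : ℕ} (σ : Equiv.Perm (Fin ν)) (S T : Finset (Fin ν)) :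
    coeff (expo ν S T) (covPoly ν σ)
      = if S.image σ = T then (-1 : ℂ) ^ Sᶜ.card else 0 := by
  classical
  rw [covPoly_eq, coeff_sum]
  rw [Finset.sum_eq_single S
    (fun S' _ hne => by
      rw [coeff_monomial, if_neg]
      intro h
      exact hne (expo_inj h).1)
    (by intro h; exact absurd (Finset.mem_univ S) h)]
  rw [coeff_monomial]
  by_cases h : S.image σ = T
  · rw [if_pos h, if_pos (by rw [h])]
  · rw [if_neg h, if_neg (fun hh => h (expo_inj hh).2)]

lemma coeff_rvbPoly {ν : ℕ} (Ψ : Finset (Equiv.Perm (Fin ν))) (S T : Finset (Fin ν)) :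
    coeff (expo ν S T) (rvbPoly ν Ψ)
      = (-1 : ℂ) ^ Sᶜ.card * ((Ψ.filter fun (σ : Equiv.Perm (Fin ν)) => S.image ⇑σ = T).card : ℂ) := by
  classical
  rw [rvbPoly, coeff_sum]
  simp_rw [coeff_covPoly]
  rw [Finset.sum_ite, Finset.sum_const, Finset.sum_const_zero, add_zero, nsmul_eq_mul, mul_comm]

lemma expo_mem_support {ν : ℕ} (Ψ : Finset (Equiv.Perm (Fin ν))) (S T : Finset (Fin ν))
    (h : ∃ σ ∈ Ψ, S.image σ = T) : expo ν S T ∈ (rvbPoly ν Ψ).support := by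
  classical
  rw [MvPolynomial.mem_support_iff, coeff_rvbPoly]
  obtain ⟨σ, hσ, hst⟩ := h
  have : 0 < (Ψ.filter fun (σ : Equiv.Perm (Fin ν)) => S.image ⇑σ = T).card :=
    Finset.card_pos.2 ⟨σ, Finset.mem_filter.2 ⟨hσ, hst⟩⟩
  exact mul_ne_zero (pow_ne_zero _ (by norm_num)) (by exact_mod_cast this.ne')

lemma two_le_imgs_card {ν : ℕ} (Ψ : Finset (Equiv.Perm (Fin ν))) (S : Finset (Fin ν))
    (t : Fin ν) (hS : ∀ s : Fin ν, s ∈ S ↔ s ≠ t)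
    (σ σ' : Equiv.Perm (Fin ν)) (hσ : σ ∈ Ψ) (hσ' : σ' ∈ Ψ) (hne : σ t ≠ σ' t) :
    2 ≤ (Ψ.image (fun σ : Equiv.Perm (Fin ν) => S.image ⇑σ)).card := by
  classical
  refine Finset.one_lt_card.2 ⟨S.image ⇑σ, Finset.mem_image_of_mem _ hσ,
    S.image ⇑σ', Finset.mem_image_of_mem _ hσ', ?_⟩
  intro h
  have h1 : σ' t ∈ S.image ⇑σ := by
    refine Finset.mem_image.2 ⟨σ.symm (σ' t), ?_, σ.apply_symm_apply _⟩
    rw [hS]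
    intro hst
    apply hne
    have := congrArg σ hst
    rw [σ.apply_symm_apply] at this
    exact this.symm
  have h2 : σ' t ∉ S.image ⇑σ' := by
    intro hmem
    obtain ⟨s, hs, hss⟩ := Finset.mem_image.1 hmem
    exact ((hS s).1 hs) (σ'.injective hss)
  rw [h] at h1
  exact h2 h1

lemma two_le_imgs_card_singleton {ν : ℕ} (Ψ : Finset (Equiv.Perm (Fin ν))) (t : Fin ν)
    (σ σ' : Equiv.Perm (Fin ν)) (hσ : σ ∈ Ψ) (hσ' : σ' ∈ Ψ) (hne : σ t ≠ σ' t) :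
    2 ≤ (Ψ.image (fun σ : Equiv.Perm (Fin ν) => ({t} : Finset (Fin ν)).image ⇑σ)).card := by
  classical
  refine Finset.one_lt_card.2 ⟨_, Finset.mem_image_of_mem _ hσ,
    _, Finset.mem_image_of_mem _ hσ', ?_⟩
  simp only [Finset.image_singleton]
  intro h
  exact hne (Finset.singleton_injective h)

lemma support_lb {ν : ℕ} (hν : 3 ≤ ν) (Ψ : Finset (Equiv.Perm (Fin ν))) (hne : Ψ.Nonempty)
    (H : ∀ t : Fin ν, ∃ σ ∈ Ψ, ∃ σ' ∈ Ψ, σ t ≠ σ' t) :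
    2 ^ ν + 2 * ν ≤ (rvbPoly ν Ψ).support.card := by
  classical
  set imgs : Finset (Fin ν) → Finset (Finset (Fin ν)) :=
    fun S => Ψ.image (fun σ : Equiv.Perm (Fin ν) => S.image ⇑σ) with himgs
  set U : Finset (Fin (2 * ν) →₀ ℕ) :=
    Finset.univ.biUnion (fun S : Finset (Fin ν) => (imgs S).image (fun T => expo ν S T)) with hU
  have hUsub : U ⊆ (rvbPoly ν Ψ).support := by
    intro e he
    obtain ⟨S, _, he⟩ := Finset.mem_biUnion.1 he
    obtain ⟨T, hT, rfl⟩ := Finset.mem_image.1 he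
    obtain ⟨σ, hσ, rfl⟩ := Finset.mem_image.1 hT
    exact expo_mem_support Ψ S _ ⟨σ, hσ, rfl⟩
  have hcard : U.card = ∑ S : Finset (Fin ν), (imgs S).card := by
    rw [hU, Finset.card_biUnion]
    · exact Finset.sum_congr rfl fun S _ =>
        Finset.card_image_of_injective _ (fun T T' h => (expo_inj h).2)
    · intro S _ S' _ hSS'
      simp only [Finset.disjoint_left]
      intro e he he'
      obtain ⟨T, _, rfl⟩ := Finset.mem_image.1 he
      obtain ⟨T', _, h⟩ := Finset.mem_image.1 he'
      exact hSS' (expo_inj h).1.symm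
  have hpt : ∀ S : Finset (Fin ν),
      1 + ((if S.card = 1 then 1 else 0) + if S.card = ν - 1 then 1 else 0)
        ≤ (imgs S).card := by
    intro S
    by_cases h1 : S.card = 1
    · have hne1 : ¬ (S.card = ν - 1) := by omega
      rw [if_pos h1, if_neg hne1]
      obtain ⟨t, rfl⟩ := Finset.card_eq_one.1 h1
      obtain ⟨σ, hσ, σ', hσ', hd⟩ := H t
      exact two_le_imgs_card_singleton Ψ t σ σ' hσ hσ' hd
    · by_cases h2 : S.card = ν - 1
      · rw [if_neg h1, if_pos h2]
        have hc : Sᶜ.card = 1 := by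
          rw [Finset.card_compl, Fintype.card_fin, h2]
          omega
        obtain ⟨t, ht⟩ := Finset.card_eq_one.1 hc
        have hS : ∀ s : Fin ν, s ∈ S ↔ s ≠ t := by
          intro s
          rw [← Finset.notMem_compl, ht, Finset.mem_singleton]
        obtain ⟨σ, hσ, σ', hσ', hd⟩ := H t
        exact two_le_imgs_card Ψ S t hS σ σ' hσ hσ' hd
      · rw [if_neg h1, if_neg h2]
        have := Finset.card_pos.2 (hne.image (fun σ : Equiv.Perm (Fin ν) => S.image ⇑σ))
        simp only [himgs]
        omega
  have hsum : ∑ S : Finset (Fin ν),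
      (1 + ((if S.card = 1 then 1 else 0) + if S.card = ν - 1 then 1 else 0))
        ≤ ∑ S : Finset (Fin ν), (imgs S).card := Finset.sum_le_sum fun S _ => hpt S
  have hcount : ∀ k : ℕ, (∑ S : Finset (Fin ν), if S.card = k then 1 else 0) = ν.choose k := by
    intro k
    rw [← Finset.sum_filter]
    simp only [Finset.sum_const, smul_eq_mul, mul_one]
    have : Finset.univ.filter (fun S : Finset (Fin ν) => S.card = k)
        = Finset.powersetCard k Finset.univ := by
      rw [Finset.powersetCard_eq_filter, Finset.powerset_univ]
    rw [this, Finset.card_powersetCard, Finset.card_univ, Fintype.card_fin]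
  have hval : ∑ S : Finset (Fin ν),
      (1 + ((if S.card = 1 then 1 else 0) + if S.card = ν - 1 then 1 else 0))
        = 2 ^ ν + 2 * ν := by
    have hch : ν.choose (ν - 1) = ν :=
      (Nat.choose_symm (show 1 ≤ ν by omega)).trans (Nat.choose_one_right ν)
    rw [Finset.sum_add_distrib, Finset.sum_add_distrib, hcount 1, hcount (ν - 1),
      Finset.sum_const, Finset.card_univ, Fintype.card_finset, Fintype.card_fin,
      Nat.choose_one_right, smul_eq_mul, mul_one, hch]
    omega
  calc 2 ^ ν + 2 * ν = _ := hval.symm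
    _ ≤ ∑ S : Finset (Fin ν), (imgs S).card := hsum
    _ = U.card := hcard.symm
    _ ≤ _ := Finset.card_le_card hUsub

lemma mapsCut_pair {ν : ℕ} (t u : Fin ν) (σ : Equiv.Perm (Fin ν)) (h : σ t = u) :
    MapsCut ν σ {siteA ν t, siteB ν u} := by
  classical
  unfold MapsCut
  have hfil : Finset.univ.filter
      (fun t' => siteA ν t' ∈ ({siteA ν t, siteB ν u} : Finset (Fin (2*ν)))) = {t} := by
    ext t'
    simp only [Finset.mem_filter, Finset.mem_univ, true_and, Finset.mem_insert,
      Finset.mem_singleton]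
    constructor
    · rintro (hh | hh)
      · exact siteA_inj hh
      · exact absurd hh (siteA_ne_siteB _ _)
    · rintro rfl; exact Or.inl rfl
  rw [hfil, Finset.image_singleton, h]
  ext x
  simp only [Finset.mem_singleton, Finset.mem_filter, Finset.mem_insert]
  constructor
  · rintro rfl
    refine ⟨Or.inr rfl, ?_⟩
    simp [siteB]
  · rintro ⟨(rfl | rfl), hpar⟩
    · exfalso
      simp only [siteA] at hpar
      omega
    · rfl

lemma splits_pair {ν : ℕ} (Ψ : Finset (Equiv.Perm (Fin ν))) (t u : Fin ν)
    (h : ∀ σ ∈ Ψ, σ t = u) :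
    SplitsAcross (rvbPoly ν Ψ) {siteA ν t, siteB ν u} := by
  classical
  refine ⟨X (siteB ν u) - X (siteA ν t),
    ∑ σ ∈ Ψ, ∏ t' ∈ Finset.univ.erase t, (X (siteB ν (σ t')) - X (siteA ν t')), ?_, ?_, ?_⟩
  · rw [Finset.mul_sum, rvbPoly]
    refine Finset.sum_congr rfl fun σ hσ => ?_
    rw [covPoly, ← Finset.mul_prod_erase Finset.univ _ (Finset.mem_univ t), h σ hσ]
  · refine (vars_sub_subset _).trans ?_
    rw [vars_X, vars_X]
    intro x hx
    rcases Finset.mem_union.1 hx with hx | hx <;>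
      simp only [Finset.mem_singleton] at hx <;>
      simp [hx, Finset.mem_insert]
  · refine (vars_sum_subset _ _).trans ?_
    intro x hx
    obtain ⟨σ, hσ, hx⟩ := Finset.mem_biUnion.1 hx
    have hx2 := vars_prod (s := Finset.univ.erase t)
      (fun t' => (X (siteB ν (σ t')) - X (siteA ν t') : MvPolynomial (Fin (2*ν)) ℂ)) hx
    obtain ⟨t', ht', hx3⟩ := Finset.mem_biUnion.1 hx2
    have ht'ne : t' ≠ t := Finset.ne_of_mem_erase ht'
    have hx4 := vars_sub_subset _ hx3
    rw [vars_X, vars_X] at hx4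
    rw [Finset.mem_compl]
    intro hmem
    rcases Finset.mem_union.1 hx4 with h5 | h5 <;>
      rw [Finset.mem_singleton] at h5 <;>
      subst h5 <;>
      rcases Finset.mem_insert.1 hmem with h6 | h6
    · exact siteA_ne_siteB t (σ t') h6.symm
    · rw [Finset.mem_singleton] at h6
      exact ht'ne (σ.injective (by rw [siteB_inj h6, h σ hσ]))
    · exact ht'ne (siteA_inj h6)
    · rw [Finset.mem_singleton] at h6
      exact siteA_ne_siteB t' u h6

/-- Theorem 3.2(ii): if the number of monomials of `F_Ψ` is
`< 2^ν + 2ν`, then some `a ∈ A`, `b ∈ B` satisfy `ψ(a) = b` for all `ψ ∈ Ψ`;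
hence `Ψ` is decomposable via `E = {a,b}` and `F_Ψ` splits across `({a,b}, {a,b}ᶜ)`. -/
theorem stmt_11 (ν : ℕ) (hν : 3 ≤ ν) (Ψ : Finset (Equiv.Perm (Fin ν)))
    (hΨ : 2 ≤ Ψ.card)
    (ht : (rvbPoly ν Ψ).support.card < 2 ^ ν + 2 * ν) :
    ∃ t u : Fin ν, (∀ σ ∈ Ψ, σ t = u) ∧
      (∀ σ ∈ Ψ, MapsCut ν σ {siteA ν t, siteB ν u}) ∧
      SplitsAcross (rvbPoly ν Ψ) {siteA ν t, siteB ν u} := by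
  classical
  have hne : Ψ.Nonempty := Finset.card_pos.1 (by omega)
  by_cases hkey : ∀ t : Fin ν, ∃ σ ∈ Ψ, ∃ σ' ∈ Ψ, σ t ≠ σ' t
  · exact absurd ht (not_lt.2 (support_lb hν Ψ hne hkey))
  · push_neg at hkey
    obtain ⟨t, hall⟩ := hkey
    obtain ⟨σ₀, hσ₀⟩ := hne
    refine ⟨t, σ₀ t, fun σ hσ => hall σ hσ σ₀ hσ₀, fun σ hσ => ?_, ?_⟩
    · exact mapsCut_pair t (σ₀ t) σ (hall σ hσ σ₀ hσ₀)
    · exact splits_pair Ψ t (σ₀ t) (fun σ hσ => hall σ hσ σ₀ hσ₀)
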